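/- For m > 2d, the map η sending a (m−d, d−1) ballot sequence β = β_1...β_{m−1} to the set {i : β_i = Y} ∪ {m} is a well-defined bijection from the set of (m−d, d−1) ballot sequences to the set of admissible pinnacle sets with maximum m and cardinality d. -/

import Mathlib

/-!
The condition `s_i > 2i` on the sorted elements of `S` is equivalent to a counting condition:
`2 · #{s ∈ S | s ≤ t} < t` whenever some element of `S` is `≤ t` (take `t = s_i`, resp. the largest
element `≤ t`). For `S = η(β)` and `0 < t < m`, `#{s ∈ S | s ≤ t}` is the number of `Y`s among
`β_1 … β_t`, so the counting condition below `m` is exactly the ballot condition on prefixes, while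
for `t ≥ m` it follows from `2d < m`. Inverting `η` on sets `S ⊆ [1, m]` containing `m` is then
just reading off `S \ {m}` as the set of `Y` positions.
-/

def Admissible (S : Finset ℕ) : Prop :=
  ∀ i (h : i < (S.sort (· ≤ ·)).length), 2 * (i + 1) < (S.sort (· ≤ ·)).get ⟨i, h⟩

def ballotSeqs (p q : ℕ) : Finset (Fin (p + q) → Bool) :=
  Finset.univ.filter fun β =>
    (Finset.univ.filter fun i => β i = true).card = p ∧
    ∀ i : Fin (p + q),
      (Finset.univ.filter fun j => j ≤ i ∧ β j = false).card <
        (Finset.univ.filter fun j => j ≤ i ∧ β j = true).card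

open Finset

theorem Finset.card_filter_le_orderEmbOfFin {α : Type*} [LinearOrder α]
    (s : Finset α) {k : ℕ} (h : #s = k) (i : Fin k) :
    #{x ∈ s | x ≤ s.orderEmbOfFin h i} = i + 1 := by
  set f := s.orderEmbOfFin h
  have hs : s = univ.image f := (s.image_orderEmbOfFin_univ h).symm
  rw [hs, filter_image, card_image_of_injective _ f.injective, ← Fin.card_Iic]
  congr 1
  ext j
  simp

theorem admissible_iff_orderEmbOfFin (S : Finset ℕ) :
    Admissible S ↔ ∀ i : Fin #S, 2 * (i + 1) < S.orderEmbOfFin rfl i :=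
  ⟨fun hS i => hS i (by simp), fun hS i hi => hS ⟨i, by simpa using hi⟩⟩

theorem admissible_iff_card_filter_le (S : Finset ℕ) :
    Admissible S ↔ ∀ t, 0 < #{x ∈ S | x ≤ t} → 2 * #{x ∈ S | x ≤ t} < t := by
  rw [admissible_iff_orderEmbOfFin]
  constructor
  · intro hS t hpos
    have hne : ({x ∈ S | x ≤ t} : Finset ℕ).Nonempty := card_pos.1 hpos
    set M := ({x ∈ S | x ≤ t} : Finset ℕ).max' hne
    obtain ⟨hMS, hMt⟩ := mem_filter.1 (max'_mem _ hne)
    obtain ⟨i, hi⟩ : M ∈ Set.range (S.orderEmbOfFin rfl) := by simpa using hMS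
    have hsame : ({x ∈ S | x ≤ t} : Finset ℕ) = {x ∈ S | x ≤ M} := by
      ext x
      simp only [mem_filter, and_congr_right_iff]
      exact fun hx => ⟨fun hxt => le_max' _ x (mem_filter.2 ⟨hx, hxt⟩), fun hxM => hxM.trans hMt⟩
    rw [hsame, ← hi, card_filter_le_orderEmbOfFin]
    exact (hS i).trans_le (hi ▸ hMt)
  · intro hS i
    have hcount := S.card_filter_le_orderEmbOfFin rfl i
    rw [← hcount]
    exact hS _ (by omega)

theorem Admissible.pos {S : Finset ℕ} (hS : Admissible S) {s : ℕ} (hs : s ∈ S) : 0 < s := by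
  have hpos : 0 < #{x ∈ S | x ≤ s} := card_pos.2 ⟨s, mem_filter.2 ⟨hs, le_rfl⟩⟩
  have := (admissible_iff_card_filter_le S).1 hS s hpos
  omega

theorem admissible_insert_iff {T : Finset ℕ} {m : ℕ} (hT : T ⊆ Ioo 0 m)
    (hcard : 2 * (#T + 1) < m) :
    Admissible (insert m T) ↔ ∀ t, 0 < t → t < m → 2 * #{x ∈ T | x ≤ t} < t := by
  have hfilter : ∀ t < m, ({x ∈ insert m T | x ≤ t} : Finset ℕ) = {x ∈ T | x ≤ t} := fun t ht => by
    rw [filter_insert, if_neg (by omega)]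
  rw [admissible_iff_card_filter_le]
  constructor
  · intro hS t ht0 htm
    rcases Nat.eq_zero_or_pos #{x ∈ T | x ≤ t} with h0 | hpos
    · omega
    · simpa only [hfilter t htm] using hS t (by rwa [hfilter t htm])
  · intro hT' t hpos
    rcases lt_or_ge t m with htm | hmt
    · rw [hfilter t htm] at hpos ⊢
      obtain ⟨x, hx⟩ := card_pos.1 hpos
      obtain ⟨hxT, hxt⟩ := mem_filter.1 hx
      exact hT' t ((mem_Ioo.1 (hT hxT)).1.trans_le hxt) htm
    · calc 2 * #{x ∈ insert m T | x ≤ t} ≤ 2 * (#T + 1) :=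
            Nat.mul_le_mul_left 2 ((card_filter_le _ _).trans (card_insert_le _ _))
        _ < t := hcard.trans_le hmt

section BallotSequence

variable {n : ℕ}

/-- The `1`-indexed positions of the letter `Y` in `β`, where `Y` is encoded as `false`. -/
def yPositions (β : Fin n → Bool) : Finset ℕ :=
  (univ.filter fun i => β i = false).image fun i => i.val + 1

theorem Fin.val_add_one_injective : Function.Injective fun i : Fin n => i.val + 1 :=
  fun _ _ h => Fin.ext (Nat.succ_injective h)

theorem yPositions_subset_Ioo (β : Fin n → Bool) : yPositions β ⊆ Ioo 0 (n + 1) := by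
  intro x hx
  obtain ⟨i, -, rfl⟩ := mem_image.1 hx
  simp

theorem succ_mem_yPositions_iff (β : Fin n → Bool) (i : Fin n) :
    i.val + 1 ∈ yPositions β ↔ β i = false := by
  simp [yPositions, Fin.val_inj]

theorem card_yPositions (β : Fin n → Bool) : #(yPositions β) = #{i | β i = false} :=
  card_image_of_injective _ Fin.val_add_one_injective

theorem card_filter_yPositions_le (β : Fin n → Bool) (i : Fin n) :
    #{x ∈ yPositions β | x ≤ i.val + 1} = #{j | j ≤ i ∧ β j = false} := by
  rw [yPositions, filter_image, card_image_of_injective _ Fin.val_add_one_injective, filter_filter]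
  congr 1
  ext j
  simp only [mem_filter, mem_univ, true_and, Fin.le_def, Nat.add_le_add_iff_right]
  exact and_comm

theorem yPositions_injective : Function.Injective (yPositions (n := n)) := by
  intro β β' h
  funext i
  have hi := succ_mem_yPositions_iff β i
  rw [h, succ_mem_yPositions_iff] at hi
  cases hβ : β i <;> cases hβ' : β' i <;> simp_all

theorem exists_yPositions_eq {T : Finset ℕ} (hT : T ⊆ Ioo 0 (n + 1)) :
    ∃ β : Fin n → Bool, yPositions β = T := by
  refine ⟨fun i => decide (i.val + 1 ∉ T), ?_⟩
  ext x
  constructor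
  · intro hx
    obtain ⟨i, hi, rfl⟩ := mem_image.1 hx
    simpa using hi
  · intro hx
    obtain ⟨hx0, hxn⟩ := mem_Ioo.1 (hT hx)
    obtain ⟨k, rfl⟩ : ∃ k, x = k + 1 := ⟨x - 1, by omega⟩
    exact mem_image.2 ⟨⟨k, by omega⟩, by simpa using hx, rfl⟩

theorem card_filter_le_false_add_true (β : Fin n → Bool) (i : Fin n) :
    #{j | j ≤ i ∧ β j = false} + #{j | j ≤ i ∧ β j = true} = i + 1 := by
  rw [← Fin.card_Iic, ← card_filter_add_card_filter_not (s := Iic i) (p := fun j => β j = false)]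
  simp only [Bool.not_eq_false]
  congr 2 <;> ext j <;> simp

theorem mem_ballotSeqs_iff {p q : ℕ} (β : Fin (p + q) → Bool) :
    β ∈ ballotSeqs p q ↔ #(yPositions β) = q ∧
      ∀ t, 0 < t → t < p + q + 1 → 2 * #{x ∈ yPositions β | x ≤ t} < t := by
  have htotal : #{i | β i = true} + #{i | β i = false} = p + q := by
    simpa using card_filter_add_card_filter_not (s := univ) (p := fun i => β i = true)
  have hprefix : ∀ i : Fin (p + q), #{j | j ≤ i ∧ β j = false} < #{j | j ≤ i ∧ β j = true} ↔
      2 * #{x ∈ yPositions β | x ≤ i.val + 1} < i.val + 1 := fun i => by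
    have := card_filter_le_false_add_true β i
    rw [card_filter_yPositions_le]
    omega
  simp only [ballotSeqs, mem_filter, mem_univ, true_and, hprefix, card_yPositions]
  refine and_congr (by omega) ⟨fun h t ht0 htn => ?_, fun h i => h _ (by omega) (by omega)⟩
  obtain ⟨k, rfl⟩ : ∃ k, t = k + 1 := ⟨t - 1, by omega⟩
  exact h ⟨k, by omega⟩

end BallotSequence

theorem bijOn_yPositions_union_ballotSeqs (p q : ℕ) (hqp : q + 1 < p) :
    Set.BijOn (fun β : Fin (p + q) → Bool => yPositions β ∪ {p + q + 1})
      (ballotSeqs p q : Set (Fin (p + q) → Bool))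
      {S : Finset ℕ | Admissible S ∧ #S = q + 1 ∧ p + q + 1 ∈ S ∧ ∀ s ∈ S, s ≤ p + q + 1} := by
  set m := p + q + 1
  have hcard : 2 * (q + 1) < m := by omega
  have hunion : ∀ β : Fin (p + q) → Bool, yPositions β ∪ {m} = insert m (yPositions β) :=
    fun β => by rw [union_comm, insert_eq]
  have hnotMem : ∀ β : Fin (p + q) → Bool, m ∉ yPositions β := fun β h => by
    have := mem_Ioo.1 (yPositions_subset_Ioo β h)
    omega
  refine ⟨fun β hβ => ?_, fun β _ β' _ h => ?_, fun S hS => ?_⟩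
  · obtain ⟨hq, hprefix⟩ := (mem_ballotSeqs_iff β).1 hβ
    dsimp only [Set.mem_ofPred_eq]
    rw [hunion]
    refine ⟨?_, by rw [card_insert_of_notMem (hnotMem β), hq], mem_insert_self m _, ?_⟩
    · exact (admissible_insert_iff (yPositions_subset_Ioo β) (by rwa [hq])).2 hprefix
    · simpa using fun x hx => (mem_Ioo.1 (yPositions_subset_Ioo β hx)).2.le
  · apply yPositions_injective
    simpa [hunion, erase_insert (hnotMem _)] using congrArg (erase · m) h
  · obtain ⟨hA, hS, hmS, hle⟩ := hS
    have hT : S.erase m ⊆ Ioo 0 m := fun x hx => by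
      obtain ⟨hxm, hxS⟩ := mem_erase.1 hx
      exact mem_Ioo.2 ⟨hA.pos hxS, (hle x hxS).lt_of_ne hxm⟩
    obtain ⟨β, hβ⟩ := exists_yPositions_eq hT
    have hq : #(yPositions β) = q := by rw [hβ, card_erase_of_mem hmS, hS]; rfl
    refine ⟨β, (mem_ballotSeqs_iff β).2 ⟨hq, ?_⟩, by dsimp only; rw [hunion, hβ, insert_erase hmS]⟩
    rw [hβ]
    refine (admissible_insert_iff hT (by rw [← hβ, hq]; exact hcard)).1 ?_
    rwa [insert_erase hmS]

/-- For `m > 2d`, the map `η(β) = {i : β_i = Y} ∪ {m}` (positions `1`-indexed) is a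
bijection from `(m−d, d−1)` ballot sequences onto admissible pinnacle sets with
maximum `m` and cardinality `d`. -/
theorem stmt11 (m d : ℕ) (hd : 0 < d) (h : 2 * d < m) :
    Set.BijOn
      (fun β : Fin ((m - d) + (d - 1)) → Bool =>
        (Finset.univ.filter fun i => β i = false).image (fun i => i.val + 1) ∪
          ({m} : Finset ℕ))
      (ballotSeqs (m - d) (d - 1) : Set (Fin ((m - d) + (d - 1)) → Bool))
      {S : Finset ℕ | Admissible S ∧ S.card = d ∧ m ∈ S ∧ ∀ s ∈ S, s ≤ m} := by
  have hbij := bijOn_yPositions_union_ballotSeqs (m - d) (d - 1) (by omega)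
  rwa [show m - d + (d - 1) + 1 = m by omega, Nat.sub_add_cancel hd] at hbij
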